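/- Let m be a positive odd integer and let α, β be real numbers with 0 < α ≤ β. Then the function V(t) = ψ^(m)(α+t)/ψ^(m)(β+t) is non-increasing on [0,∞). -/

import Mathlib

/-- The digamma (psi) function: logarithmic derivative of the Gamma function. -/
noncomputable def psi (t : ℝ) : ℝ := deriv Real.Gamma t / Real.Gamma t

/-!
`ψ` is monotone on `(0, ∞)` (log-convexity of `Γ`) and satisfies `ψ (x + 1) = ψ x + 1 / x`.
These two properties determine it up to an additive constant, which gives the series
`ψ x = ψ 1 + ∑ (1 / (n + 1) - 1 / (n + x))`. Differentiating termwise,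
`ψ^(m) x = (-1)^(m+1) m! ζ(m + 1, x)` with the Hurwitz sum `ζ(s, x) = ∑ (n + x)^(-s)`, so
`V t = ζ(s, α + t) / ζ(s, β + t)` for `s = m + 1`. With `a = α + t ≤ b = β + t`, its
derivative has the sign of `ζ(s, a) ζ(s + 1, b) - ζ(s + 1, a) ζ(s, b)`, which is `≤ 0` by a
weighted Chebyshev sum inequality: both `(n + a)⁻¹` and `((n + b) / (n + a))^s` decrease in `n`.
-/

open Real Set Filter Topology
open scoped Nat

theorem tsum_nonneg_of_add_swap_nonneg {ι : Type*} {F : ι × ι → ℝ} (hF : Summable F)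
    (h : ∀ i j, 0 ≤ F (i, j) + F (j, i)) : 0 ≤ ∑' p, F p := by
  have hswap : ∑' p : ι × ι, F p.swap = ∑' p, F p := (Equiv.prodComm ι ι).tsum_eq F
  have hsum : 0 ≤ ∑' p : ι × ι, (F p + F p.swap) := tsum_nonneg fun p => h p.1 p.2
  rw [hF.tsum_add hF.prod_symm, hswap] at hsum
  linarith

theorem tsum_mul_tsum_mul_le_of_antitone {ι : Type*} [LinearOrder ι] {a b c : ι → ℝ}
    (ha : 0 ≤ a) (hb : 0 ≤ b) (hc : 0 ≤ c) (hc_anti : Antitone c)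
    (hab : ∀ i j, i ≤ j → a j * b i ≤ a i * b j) (ha_sum : Summable a) (hb_sum : Summable b)
    (hac_sum : Summable fun i => a i * c i) (hbc_sum : Summable fun i => b i * c i) :
    (∑' i, a i) * ∑' j, b j * c j ≤ (∑' i, a i * c i) * ∑' j, b j := by
  have hF₁ : Summable fun p : ι × ι => a p.1 * (b p.2 * c p.2) :=
    ha_sum.mul_of_nonneg hbc_sum ha fun j => mul_nonneg (hb j) (hc j)
  have hF₂ : Summable fun p : ι × ι => a p.1 * c p.1 * b p.2 :=
    hac_sum.mul_of_nonneg hb_sum (fun i => mul_nonneg (ha i) (hc i)) hb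
  rw [ha_sum.tsum_mul_tsum hbc_sum hF₁, hac_sum.tsum_mul_tsum hb_sum hF₂, ← sub_nonneg,
    ← hF₂.tsum_sub hF₁]
  refine tsum_nonneg_of_add_swap_nonneg (hF₂.sub hF₁) fun i j => ?_
  -- the summands at `(i, j)` and `(j, i)` add up to this product
  have key : 0 ≤ (c i - c j) * (a i * b j - a j * b i) := by
    rcases le_total i j with hij | hji
    · exact mul_nonneg (sub_nonneg.2 (hc_anti hij)) (sub_nonneg.2 (hab i j hij))
    · exact mul_nonneg_of_nonpos_of_nonpos (sub_nonpos.2 (hc_anti hji))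
        (sub_nonpos.2 (hab j i hji))
  dsimp only
  linarith

section ShiftedPowers

variable {q x : ℝ}

theorem summable_nat_add_rpow (hx : 0 < x) (hq : q < -1) :
    Summable fun n : ℕ => ((n : ℝ) + x) ^ q := by
  refine ((summable_one_div_nat_add_rpow x (-q)).2 (by linarith)).congr fun n => ?_
  have hnx : 0 < (n : ℝ) + x := by positivity
  rw [abs_of_pos hnx, one_div, ← rpow_neg hnx.le, neg_neg]

theorem hasDerivAt_const_sub_nat_add_rpow (c : ℝ) (n : ℕ) (hx : 0 < x) :
    HasDerivAt (fun y => c - ((n : ℝ) + y) ^ q) (-(q * ((n : ℝ) + x) ^ (q - 1))) x := by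
  have hnx : (n : ℝ) + x ≠ 0 := by positivity
  exact ((hasDerivAt_rpow_const (Or.inl hnx)).comp_const_add (n : ℝ) x).const_sub c

theorem norm_deriv_nat_add_rpow_le {ε y : ℝ} (hq : q < 0) (hε : 0 < ε) (hy : ε < y)
    (n : ℕ) :
    ‖-(q * ((n : ℝ) + y) ^ (q - 1))‖ ≤ |q| * ((n : ℝ) + ε) ^ (q - 1) := by
  have hnε : 0 < (n : ℝ) + ε := by positivity
  rw [norm_neg, norm_mul, Real.norm_eq_abs, Real.norm_eq_abs,
    abs_of_pos (rpow_pos_of_pos (by linarith) _)]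
  exact mul_le_mul_of_nonneg_left (rpow_le_rpow_of_nonpos hnε (by linarith) (by linarith))
    (abs_nonneg q)

variable {c : ℕ → ℝ}

theorem summable_sub_nat_add_rpow {y₀ : ℝ} (hq : q < 0) (hy₀ : 0 < y₀)
    (hc : Summable fun n => c n - ((n : ℝ) + y₀) ^ q) (hx : 0 < x) :
    Summable fun n => c n - ((n : ℝ) + x) ^ q := by
  obtain ⟨ε, hε, hεy₀, hεx⟩ : ∃ ε, 0 < ε ∧ ε < y₀ ∧ ε < x :=
    ⟨min y₀ x / 2, by positivity, by linarith [min_le_left y₀ x],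
      by linarith [min_le_right y₀ x]⟩
  exact summable_of_summable_hasDerivAt_of_isPreconnected (t := Ioi ε)
    (g := fun (n : ℕ) y => c n - ((n : ℝ) + y) ^ q)
    ((summable_nat_add_rpow hε (by linarith)).mul_left |q|) isOpen_Ioi
    (convex_Ioi ε).isPreconnected
    (fun n y hy => hasDerivAt_const_sub_nat_add_rpow (c n) n (hε.trans hy))
    (fun n y hy => norm_deriv_nat_add_rpow_le hq hε hy n) hεy₀ hc hεx

theorem hasDerivAt_tsum_sub_nat_add_rpow (hq : q < 0) (hx : 0 < x)
    (hc : Summable fun n => c n - ((n : ℝ) + x) ^ q) :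
    HasDerivAt (fun y => ∑' n, (c n - ((n : ℝ) + y) ^ q))
      (-q * ∑' n : ℕ, ((n : ℝ) + x) ^ (q - 1)) x := by
  have hε : 0 < x / 2 := half_pos hx
  have h := hasDerivAt_tsum_of_isPreconnected (g := fun (n : ℕ) y => c n - ((n : ℝ) + y) ^ q)
    ((summable_nat_add_rpow hε (by linarith)).mul_left |q|) isOpen_Ioi
    (convex_Ioi _).isPreconnected
    (fun n y hy => hasDerivAt_const_sub_nat_add_rpow (c n) n (hε.trans hy))
    (fun n y hy => norm_deriv_nat_add_rpow_le hq hε hy n) (half_lt_self hx) hc (half_lt_self hx)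
  rwa [tsum_neg, tsum_mul_left, ← neg_mul] at h

end ShiftedPowers

noncomputable def hurwitzSum (s x : ℝ) : ℝ := ∑' n : ℕ, ((n : ℝ) + x) ^ (-s)

section HurwitzSum

variable {s x : ℝ}

theorem hurwitzSum_pos (hs : 1 < s) (hx : 0 < x) : 0 < hurwitzSum s x :=
  (summable_nat_add_rpow hx (by linarith)).tsum_pos (fun n => by positivity) 0 (by positivity)

theorem hasDerivAt_hurwitzSum (hs : 1 < s) (hx : 0 < x) :
    HasDerivAt (hurwitzSum s) (-s * hurwitzSum (s + 1) x) x := by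
  have h := hasDerivAt_tsum_sub_nat_add_rpow (c := 0) (q := -s) (by linarith) hx
    (by simpa using (summable_nat_add_rpow hx (by linarith : -s < -1)).neg)
  have hneg :
      (fun y => ∑' n : ℕ, ((0 : ℕ → ℝ) n - ((n : ℝ) + y) ^ (-s))) = -hurwitzSum s := by
    ext y
    simp [hurwitzSum, tsum_neg]
  rw [hneg] at h
  refine (neg_neg (hurwitzSum s) ▸ h.neg).congr_deriv ?_
  rw [hurwitzSum, neg_add']
  ring

theorem add_rpow_neg_mul_add_rpow_neg_le {a b i j : ℝ} (hs : 0 ≤ s) (ha : 0 < a) (hab : a ≤ b)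
    (hi : 0 ≤ i) (hij : i ≤ j) :
    (j + a) ^ (-s) * (i + b) ^ (-s) ≤ (i + a) ^ (-s) * (j + b) ^ (-s) := by
  rw [← mul_rpow (by linarith) (by linarith), ← mul_rpow (by linarith) (by linarith)]
  exact rpow_le_rpow_of_nonpos (by nlinarith)
    (by nlinarith [mul_nonneg (sub_nonneg.2 hij) (sub_nonneg.2 hab)]) (by linarith)

theorem hurwitzSum_mul_hurwitzSum_add_one_le {a b : ℝ} (hs : 1 < s) (ha : 0 < a) (hab : a ≤ b) :
    hurwitzSum s a * hurwitzSum (s + 1) b ≤ hurwitzSum (s + 1) a * hurwitzSum s b := by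
  have hb : 0 < b := ha.trans_le hab
  have rpow_succ : ∀ x, 0 < x → ∀ n : ℕ,
      ((n : ℝ) + x) ^ (-(s + 1)) = ((n : ℝ) + x) ^ (-s) * ((n : ℝ) + x) ^ (-1 : ℝ) := by
    intro x hx n
    rw [neg_add, rpow_add (by positivity)]
  set A : ℕ → ℝ := fun n => ((n : ℝ) + a) ^ (-s)
  set B : ℕ → ℝ := fun n => ((n : ℝ) + b) ^ (-s)
  set c : ℕ → ℝ := fun n => ((n : ℝ) + a) ^ (-1 : ℝ)
  have hA : Summable A := summable_nat_add_rpow ha (by linarith)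
  have hB : Summable B := summable_nat_add_rpow hb (by linarith)
  have hAc : Summable fun n => A n * c n := by
    simpa only [rpow_succ a ha] using summable_nat_add_rpow ha (by linarith : -(s + 1) < -1)
  have hBc : Summable fun n => B n * c n :=
    hAc.of_nonneg_of_le (fun n => by positivity) fun n => mul_le_mul_of_nonneg_right
      (rpow_le_rpow_of_nonpos (by positivity) (by linarith) (by linarith)) (by positivity)
  have hc_anti : Antitone c := fun i j hij =>
    rpow_le_rpow_of_nonpos (by positivity) (by gcongr) (by norm_num)
  have hAB : ∀ i j : ℕ, i ≤ j → A j * B i ≤ A i * B j := fun i j hij =>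
    add_rpow_neg_mul_add_rpow_neg_le (by linarith) ha hab i.cast_nonneg (by exact_mod_cast hij)
  calc hurwitzSum s a * hurwitzSum (s + 1) b
      = (∑' n, A n) * ∑' n, B n * ((n : ℝ) + b) ^ (-1 : ℝ) := by
        simp only [hurwitzSum, rpow_succ b hb, A, B]
    _ ≤ (∑' n, A n) * ∑' n, B n * c n := by
        refine mul_le_mul_of_nonneg_left (Summable.tsum_le_tsum (fun n => ?_) ?_ hBc)
          (tsum_nonneg fun n => by positivity)
        · exact mul_le_mul_of_nonneg_left
            (rpow_le_rpow_of_nonpos (by positivity) (by linarith) (by norm_num)) (by positivity)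
        · simpa only [rpow_succ b hb] using summable_nat_add_rpow hb (by linarith : -(s + 1) < -1)
    _ ≤ (∑' n, A n * c n) * ∑' n, B n :=
        tsum_mul_tsum_mul_le_of_antitone (fun n => by positivity) (fun n => by positivity)
          (fun n => by positivity) hc_anti hAB hA hB hAc hBc
    _ = hurwitzSum (s + 1) a * hurwitzSum s b := by
        simp only [hurwitzSum, rpow_succ a ha, A, B, c]

theorem antitoneOn_hurwitzSum_div {α β : ℝ} (hs : 1 < s) (hαβ : α ≤ β) :
    AntitoneOn (fun t => hurwitzSum s (α + t) / hurwitzSum s (β + t)) (Ioi (-α)) := by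
  have hderiv : ∀ t ∈ Ioi (-α),
      HasDerivAt (fun t => hurwitzSum s (α + t) / hurwitzSum s (β + t))
        ((-s * hurwitzSum (s + 1) (α + t) * hurwitzSum s (β + t)
          - hurwitzSum s (α + t) * (-s * hurwitzSum (s + 1) (β + t)))
          / hurwitzSum s (β + t) ^ 2) t := by
    intro t ht
    have ha : 0 < α + t := by rw [mem_Ioi] at ht; linarith
    have hb : 0 < β + t := by linarith
    exact ((hasDerivAt_hurwitzSum hs ha).comp_const_add α t).div
      ((hasDerivAt_hurwitzSum hs hb).comp_const_add β t) (hurwitzSum_pos hs hb).ne'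
  refine antitoneOn_of_deriv_nonpos (convex_Ioi _)
    (fun t ht => (hderiv t ht).continuousAt.continuousWithinAt)
    (fun t ht => (hderiv t (interior_subset ht)).differentiableAt.differentiableWithinAt)
    fun t ht => ?_
  rw [interior_Ioi] at ht
  have ha : 0 < α + t := by rw [mem_Ioi] at ht; linarith
  have key := hurwitzSum_mul_hurwitzSum_add_one_le hs ha (by linarith : α + t ≤ β + t)
  rw [(hderiv t ht).deriv]
  refine div_nonpos_of_nonpos_of_nonneg ?_ (sq_nonneg _)
  nlinarith [mul_le_mul_of_nonneg_left key (by linarith : 0 ≤ s)]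

end HurwitzSum

theorem sub_eq_sub_of_monotoneOn_of_add_one {f g r : ℝ → ℝ}
    (hf : MonotoneOn f (Ioi 0)) (hg : MonotoneOn g (Ioi 0))
    (hf_add : ∀ x, 0 < x → f (x + 1) = f x + r x)
    (hg_add : ∀ x, 0 < x → g (x + 1) = g x + r x)
    (hr : Tendsto r atTop (𝓝 0)) {x : ℝ} (hx : 0 < x) : f x - g x = f 1 - g 1 := by
  have periodic : ∀ y, 0 < y → ∀ k : ℕ, f (y + k) - g (y + k) = f y - g y := by
    intro y hy k
    induction k with
    | zero => simp
    | succ k ih =>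
      have hyk : 0 < y + k := by positivity
      rw [Nat.cast_succ, ← add_assoc, hf_add _ hyk, hg_add _ hyk]
      linarith
  have near_integer : ∀ (n : ℕ) (y : ℝ), 0 < n → (n : ℝ) ≤ y → y ≤ n + 1 →
      |(f y - g y) - (f n - g n)| ≤ r n := by
    intro n y hn hny hyn
    have hn' : (0 : ℝ) < n := by exact_mod_cast hn
    have hy : (0 : ℝ) < y := hn'.trans_le hny
    have hn1 : (0 : ℝ) < n + 1 := by positivity
    have hf_lo := hf hn' hy hny
    have hg_lo := hg hn' hy hny
    have hf_hi := hf hy hn1 hyn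
    have hg_hi := hg hy hn1 hyn
    rw [hf_add n hn'] at hf_hi
    rw [hg_add n hn'] at hg_hi
    rw [abs_le]
    constructor <;> linarith
  have bound : ∀ k : ℕ, |(f x - g x) - (f 1 - g 1)| ≤ r (⌊x⌋₊ + k + 1 : ℕ) := by
    intro k
    set n := ⌊x⌋₊ + k + 1
    have h := near_integer n (x + (k + 1 : ℕ)) (by omega)
      (by push_cast [n]; linarith [Nat.floor_le hx.le])
      (by push_cast [n]; linarith [Nat.lt_floor_add_one x])
    have hn : f n - g n = f 1 - g 1 := by
      rw [show (n : ℝ) = 1 + ((⌊x⌋₊ + k : ℕ) : ℝ) by push_cast [n]; ring]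
      exact periodic 1 one_pos _
    rwa [periodic x hx, hn] at h
  have hlim : Tendsto (fun k : ℕ => r (⌊x⌋₊ + k + 1 : ℕ)) atTop (𝓝 0) :=
    hr.comp (tendsto_natCast_atTop_atTop.comp
      (tendsto_atTop_mono (fun k => show k ≤ ⌊x⌋₊ + k + 1 by omega) tendsto_id))
  exact sub_eq_zero.1 (abs_nonpos_iff.1 (ge_of_tendsto' hlim bound))

theorem hasSum_sub_succ_of_antitone {f : ℕ → ℝ} {l : ℝ} (hf : Antitone f)
    (hl : Tendsto f atTop (𝓝 l)) : HasSum (fun n => f n - f (n + 1)) (f 0 - l) := by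
  rw [hasSum_iff_tendsto_nat_of_nonneg fun n => sub_nonneg.2 (hf n.le_succ)]
  simp_rw [Finset.sum_range_sub']
  exact tendsto_const_nhds.sub hl

-- Exponent `-1` as `rpow`, to match the termwise differentiation lemmas above.
noncomputable def digammaSeries (x : ℝ) : ℝ :=
  ∑' n : ℕ, (((n : ℝ) + 1) ^ (-1 : ℝ) - ((n : ℝ) + x) ^ (-1 : ℝ))

section DigammaSeries

variable {x : ℝ}

theorem summable_digammaSeries (hx : 0 < x) :
    Summable fun n : ℕ => ((n : ℝ) + 1) ^ (-1 : ℝ) - ((n : ℝ) + x) ^ (-1 : ℝ) :=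
  summable_sub_nat_add_rpow (by norm_num) one_pos (by simp) hx

theorem digammaSeries_one : digammaSeries 1 = 0 := by
  simp [digammaSeries]

theorem monotoneOn_digammaSeries : MonotoneOn digammaSeries (Ioi 0) := by
  intro x hx y hy hxy
  rw [mem_Ioi] at hx hy
  refine (summable_digammaSeries hx).tsum_le_tsum (fun n => ?_) (summable_digammaSeries hy)
  exact sub_le_sub_left (rpow_le_rpow_of_nonpos (by positivity) (by linarith) (by norm_num)) _

theorem digammaSeries_add_one (hx : 0 < x) : digammaSeries (x + 1) = digammaSeries x + x⁻¹ := by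
  have htel : HasSum
      (fun n : ℕ => ((n : ℝ) + x) ^ (-1 : ℝ) - ((n : ℝ) + (x + 1)) ^ (-1 : ℝ)) x⁻¹ := by
    have h := hasSum_sub_succ_of_antitone (f := fun n : ℕ => ((n : ℝ) + x) ^ (-1 : ℝ))
      (fun i j hij => rpow_le_rpow_of_nonpos (by positivity) (by gcongr) (by norm_num))
      ((tendsto_rpow_neg_atTop one_pos).comp
        (tendsto_atTop_add_const_right _ x tendsto_natCast_atTop_atTop))
    convert h using 1
    · ext n
      push_cast
      ring_nf
    · simp [rpow_neg_one]
  rw [← sub_eq_iff_eq_add', digammaSeries, digammaSeries,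
    ← (summable_digammaSeries (by linarith)).tsum_sub (summable_digammaSeries hx),
    ← htel.tsum_eq]
  congr 1
  ext n
  ring

end DigammaSeries

section Digamma

variable {x : ℝ}

theorem hasDerivAt_log_Gamma (hx : 0 < x) : HasDerivAt (fun y => log (Gamma y)) (psi x) x :=
  (differentiableAt_Gamma fun m => by linarith [(m.cast_nonneg : (0 : ℝ) ≤ m)]).hasDerivAt.log
    (Gamma_pos_of_pos hx).ne'

theorem monotoneOn_psi : MonotoneOn psi (Ioi 0) :=
  (convexOn_log_Gamma.monotoneOn_deriv fun _ hy => (hasDerivAt_log_Gamma hy).differentiableAt).congr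
    fun _ hy => (hasDerivAt_log_Gamma hy).deriv

theorem psi_add_one (hx : 0 < x) : psi (x + 1) = psi x + x⁻¹ := by
  have h_shift : HasDerivAt (fun y => log (Gamma (y + 1))) (psi (x + 1)) x :=
    (hasDerivAt_log_Gamma (by linarith)).comp_add_const x 1
  have h_sum : HasDerivAt (fun y => log y + log (Gamma y)) (x⁻¹ + psi x) x :=
    (hasDerivAt_log hx.ne').add (hasDerivAt_log_Gamma hx)
  have h_eq : (fun y => log (Gamma (y + 1))) =ᶠ[𝓝 x] fun y => log y + log (Gamma y) := by
    filter_upwards [lt_mem_nhds hx] with y hy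
    rw [Gamma_add_one hy.ne', log_mul hy.ne' (Gamma_pos_of_pos hy).ne']
  rw [h_shift.unique (h_sum.congr_of_eventuallyEq h_eq), add_comm]

theorem psi_eq_psi_one_add_digammaSeries (hx : 0 < x) : psi x = psi 1 + digammaSeries x := by
  have h := sub_eq_sub_of_monotoneOn_of_add_one monotoneOn_psi monotoneOn_digammaSeries
    (fun _ hy => psi_add_one hy) (fun _ hy => digammaSeries_add_one hy) tendsto_inv_atTop_zero hx
  rw [digammaSeries_one] at h
  linarith

theorem hasDerivAt_psi (hx : 0 < x) : HasDerivAt psi (hurwitzSum 2 x) x := by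
  have h := hasDerivAt_tsum_sub_nat_add_rpow (by norm_num) hx (summable_digammaSeries hx)
  have h' : HasDerivAt digammaSeries (hurwitzSum 2 x) x :=
    h.congr_deriv (by norm_num [hurwitzSum])
  exact (h'.const_add (psi 1)).congr_of_eventuallyEq
    (eventually_of_mem (Ioi_mem_nhds hx) fun y hy => psi_eq_psi_one_add_digammaSeries hy)

theorem iteratedDeriv_psi {m : ℕ} (hm : 0 < m) (hx : 0 < x) :
    iteratedDeriv m psi x = (-1) ^ (m + 1) * m ! * hurwitzSum (m + 1) x := by
  induction m, hm using Nat.le_induction generalizing x with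
  | base =>
    rw [iteratedDeriv_one, (hasDerivAt_psi hx).deriv]
    norm_num
  | succ k hk ih =>
    have hs : (1 : ℝ) < k + 1 := by
      have : (1 : ℝ) ≤ k := by exact_mod_cast hk
      linarith
    have h_eq :
        iteratedDeriv k psi =ᶠ[𝓝 x] fun y => (-1) ^ (k + 1) * k ! * hurwitzSum (k + 1) y :=
      eventually_of_mem (Ioi_mem_nhds hx) fun y hy => ih hy
    rw [iteratedDeriv_succ, h_eq.deriv_eq, ((hasDerivAt_hurwitzSum hs hx).const_mul _).deriv,
      Nat.factorial_succ]
    push_cast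
    ring

end Digamma

theorem V_antitone_general (m : ℕ) (hm : 0 < m) (α β : ℝ)
    (hα : 0 < α) (hαβ : α ≤ β) :
    AntitoneOn (fun t : ℝ => iteratedDeriv m psi (α + t) / iteratedDeriv m psi (β + t))
      (Set.Ici 0) := by
  have hs : (1 : ℝ) < m + 1 := by
    have : (1 : ℝ) ≤ m := by exact_mod_cast hm
    linarith
  have hc : (-1 : ℝ) ^ (m + 1) * m ! ≠ 0 :=
    mul_ne_zero (pow_ne_zero _ (by norm_num)) (by positivity)
  refine ((antitoneOn_hurwitzSum_div hs hαβ).mono fun t (ht : 0 ≤ t) => ?_).congr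
    fun t (ht : 0 ≤ t) => ?_
  · exact (neg_neg_of_pos hα).trans_le ht
  · rw [iteratedDeriv_psi hm (by linarith), iteratedDeriv_psi hm (by linarith)]
    exact (mul_div_mul_left _ _ hc).symm

theorem V_antitone (m : ℕ) (hm : 0 < m) (hodd : Odd m) (α β : ℝ)
    (hα : 0 < α) (hαβ : α ≤ β) :
    AntitoneOn (fun t : ℝ => iteratedDeriv m psi (α + t) / iteratedDeriv m psi (β + t))
      (Set.Ici 0) :=
  V_antitone_general m hm α β hα hαβ
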